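/- The number of meanders of length 2N (nonnegative ±1 paths starting at 0) with exactly k peaks and ending at a strictly positive position equals binomial(N+1,k)·binomial(N-1,k). -/

import Mathlib

/-- The value at time `i` of the Bernoulli path with `n` steps encoded by
`f : Fin n → Bool` (`true` = step `+1`, `false` = step `-1`), started at `0`. -/
def pathVal {n : ℕ} (f : Fin n → Bool) (i : ℕ) : ℤ :=
  ∑ j ∈ Finset.range i, (if h : j < n then (if f ⟨j, h⟩ then (1 : ℤ) else -1) else 0)

/-- `x` is a peak: `1 ≤ x ≤ n-1` and `S(x-1) = S(x+1) = S(x) - 1`. -/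
def IsPeak {n : ℕ} (f : Fin n → Bool) (x : ℕ) : Prop :=
  0 < x ∧ x < n ∧ pathVal f x = pathVal f (x - 1) + 1 ∧
    pathVal f (x + 1) = pathVal f x - 1

instance {n : ℕ} (f : Fin n → Bool) (x : ℕ) : Decidable (IsPeak f x) := by
  unfold IsPeak; infer_instance

/-- Number of peaks of the path encoded by `f`. -/
def numPeaks {n : ℕ} (f : Fin n → Bool) : ℕ :=
  ((Finset.range n).filter (fun x => IsPeak f x)).card

/-- Integer binomial coefficient with the convention that it vanishes unless
`0 ≤ p ≤ m`. -/
def ichoose (m p : ℤ) : ℤ :=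
  if 0 ≤ m ∧ 0 ≤ p then ((m.toNat).choose p.toNat : ℤ) else 0

/-- `hchoose num p = binomial (num/2 - 1) p`, with the convention that it
vanishes when `num` is odd (non-integer upper argument) or when the arguments
are out of range. -/
def hchoose (num p : ℤ) : ℤ :=
  if 2 ∣ num then ichoose (num / 2 - 1) p else 0

/-- `G(l,j₁,j₂,x,y) = binomial((l+y-x)/2 - 1, j₁) · binomial((l-y+x)/2 - 1, j₂)`. -/
def G (l j1 j2 x y : ℤ) : ℤ := hchoose (l + y - x) j1 * hchoose (l - y + x) j2

/-- The path stays nonnegative on `[0, n]`. -/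
def IsNonneg {n : ℕ} (f : Fin n → Bool) : Prop :=
  ∀ i ∈ Finset.range (n + 1), 0 ≤ pathVal f i

instance {n : ℕ} (f : Fin n → Bool) : Decidable (IsNonneg f) := by
  unfold IsNonneg; infer_instance

/-! Extend a meander one step at a time, keeping track of its endpoint `y`, its number of peaks `k`
and whether its last step is up: an up step creates no peak, and a down step creates one exactly
when it follows an up step. The recursion is solved by reflection-principle formulas:
`G (n+2) k k 0 y - G (n+2) k k (-2) y` counts the meanders of length `n` ending at `y ≥ 0`, and
`G (n+1) k k 1 y - G (n+1) k k (-1) y` those ending with an up step. Since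
`G (n+2) k k (-2) y = G (n+2) k k 0 (y+2)`, the sum over `y ≥ 1` telescopes to
`G (2N+2) k k 0 2 = C(N+1,k) C(N-1,k)`. -/

open Finset

section Path

variable {n : ℕ}

lemma pathVal_succ (f : Fin n → Bool) (i : ℕ) (h : i < n) :
    pathVal f (i + 1) = pathVal f i + if f ⟨i, h⟩ then 1 else -1 := by
  rw [pathVal, sum_range_succ, dif_pos h]; rfl

lemma pathVal_le (f : Fin n → Bool) (i : ℕ) : pathVal f i ≤ i := by
  calc pathVal f i ≤ ∑ _j ∈ range i, (1 : ℤ) := by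
        refine sum_le_sum fun j _ => ?_
        split_ifs <;> norm_num
    _ = i := by simp

lemma pathVal_snoc (g : Fin n → Bool) (b : Bool) {i : ℕ} (h : i ≤ n) :
    pathVal (Fin.snoc g b) i = pathVal g i := by
  refine sum_congr rfl fun j hj => ?_
  have hj : j < n := (mem_range.1 hj).trans_le h
  rw [dif_pos hj, dif_pos (Nat.lt_succ_of_lt hj)]
  exact congrArg (fun c : Bool => if c then (1 : ℤ) else -1)
    (Fin.snoc_castSucc (i := ⟨j, hj⟩) ..)

lemma pathVal_snoc_last (g : Fin n → Bool) (b : Bool) :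
    pathVal (Fin.snoc g b) (n + 1) = pathVal g n + if b then 1 else -1 := by
  rw [pathVal_succ _ n n.lt_succ_self, pathVal_snoc g b le_rfl]
  exact congrArg (fun c : Bool => pathVal g n + if c then (1 : ℤ) else -1)
    (Fin.snoc_last (α := fun _ => Bool) b g)

lemma isNonneg_snoc (g : Fin n → Bool) (b : Bool) :
    IsNonneg (Fin.snoc g b) ↔ IsNonneg g ∧ 0 ≤ pathVal g n + if b then 1 else -1 := by
  simp only [IsNonneg, mem_range, Nat.lt_succ_iff]
  constructor
  · intro h
    refine ⟨fun i hi => ?_, pathVal_snoc_last g b ▸ h (n + 1) le_rfl⟩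
    rw [← pathVal_snoc g b hi]
    exact h i (by omega)
  · rintro ⟨hg, hlast⟩ i hi
    rcases hi.lt_or_eq with hi | rfl
    · rw [pathVal_snoc g b (by omega)]
      exact hg i (by omega)
    · rwa [pathVal_snoc_last]

def EndsUp (f : Fin n → Bool) : Prop :=
  pathVal f n = pathVal f (n - 1) + 1

instance (f : Fin n → Bool) : Decidable (EndsUp f) :=
  inferInstanceAs (Decidable (_ = _))

lemma endsUp_snoc (g : Fin n → Bool) (b : Bool) : EndsUp (Fin.snoc g b) ↔ b = true := by
  rw [EndsUp, Nat.add_sub_cancel, pathVal_snoc_last, pathVal_snoc g b le_rfl]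
  cases b <;> simp

lemma isPeak_snoc_of_lt (g : Fin n → Bool) (b : Bool) {x : ℕ} (hx : x < n) :
    IsPeak (Fin.snoc g b) x ↔ IsPeak g x := by
  simp only [IsPeak, pathVal_snoc g b hx.le, pathVal_snoc g b (x.sub_le 1 |>.trans hx.le),
    pathVal_snoc g b (show x + 1 ≤ n from hx)]
  omega

lemma isPeak_snoc_self (g : Fin n → Bool) (b : Bool) :
    IsPeak (Fin.snoc g b) n ↔ EndsUp g ∧ b = false := by
  simp only [IsPeak, EndsUp, pathVal_snoc g b le_rfl, pathVal_snoc g b (n.sub_le 1),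
    pathVal_snoc_last]
  rcases n.eq_zero_or_pos with rfl | hn
  · simp [pathVal]
  · cases b <;> simp [hn] <;> omega

lemma numPeaks_snoc (g : Fin n → Bool) (b : Bool) :
    numPeaks (Fin.snoc g b) = numPeaks g + if EndsUp g ∧ b = false then 1 else 0 := by
  have hlt : {x ∈ range n | IsPeak (Fin.snoc g b) x} = {x ∈ range n | IsPeak g x} :=
    filter_congr fun x hx => isPeak_snoc_of_lt g b (mem_range.1 hx)
  rw [numPeaks, numPeaks, range_add_one, filter_insert, hlt]
  split_ifs with h h' h'
  · rw [card_insert_of_notMem (by simp)]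
  · exact absurd ((isPeak_snoc_self g b).1 h) h'
  · exact absurd ((isPeak_snoc_self g b).2 h') h
  · rfl

end Path

section Counting

variable {n : ℕ}

def meandersTo (n : ℕ) (y : ℤ) (k : ℕ) : Finset (Fin n → Bool) :=
  {f | IsNonneg f ∧ pathVal f n = y ∧ numPeaks f = k}

lemma card_filter_apply_last_eq {α : Type*} [Fintype α] [DecidableEq α]
    (s : Finset (Fin (n + 1) → α)) (a : α) :
    #{f ∈ s | f (Fin.last n) = a} = #{g : Fin n → α | Fin.snoc g a ∈ s} := by
  refine card_nbij' Fin.init (fun g => Fin.snoc g a) ?_ ?_ ?_ ?_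
  · intro f hf
    obtain ⟨hf, rfl⟩ := mem_filter.1 hf
    simpa [Fin.snoc_init_self] using hf
  · intro g hg
    simpa using hg
  · intro f hf
    obtain ⟨-, rfl⟩ := mem_filter.1 hf
    exact Fin.snoc_init_self f
  · intro g _
    exact Fin.init_snoc (α := fun _ => α) a g

lemma endsUp_iff_last (f : Fin (n + 1) → Bool) : EndsUp f ↔ f (Fin.last n) = true := by
  simpa [Fin.snoc_init_self] using endsUp_snoc (Fin.init f) (f (Fin.last n))

lemma snoc_mem_meandersTo {y : ℤ} {k : ℕ} (hy : 0 ≤ y) (g : Fin n → Bool) (b : Bool) :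
    Fin.snoc g b ∈ meandersTo (n + 1) y k ↔
      IsNonneg g ∧ pathVal g n + (if b then 1 else -1) = y ∧
        numPeaks g + (if EndsUp g ∧ b = false then 1 else 0) = k := by
  simp only [meandersTo, mem_filter, mem_univ, true_and, isNonneg_snoc, pathVal_snoc_last,
    numPeaks_snoc]
  constructor
  · rintro ⟨⟨hg, -⟩, hy, hk⟩
    exact ⟨hg, hy, hk⟩
  · rintro ⟨hg, rfl, hk⟩
    exact ⟨⟨hg, hy⟩, rfl, hk⟩

variable {y : ℤ}

lemma card_meandersTo_succ_endsUp (hy : 0 ≤ y) (k : ℕ) :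
    #{f ∈ meandersTo (n + 1) y k | EndsUp f} = #(meandersTo n (y - 1) k) := by
  simp_rw [endsUp_iff_last, card_filter_apply_last_eq, snoc_mem_meandersTo hy]
  congr 1
  ext g
  simp [meandersTo, eq_sub_iff_add_eq]

lemma card_meandersTo_succ_succ_not_endsUp (hy : 0 ≤ y) (k : ℕ) :
    #{f ∈ meandersTo (n + 1) y (k + 1) | ¬EndsUp f} =
      #{g ∈ meandersTo n (y + 1) k | EndsUp g} +
        #{g ∈ meandersTo n (y + 1) (k + 1) | ¬EndsUp g} := by
  simp_rw [endsUp_iff_last, Bool.not_eq_true, card_filter_apply_last_eq, snoc_mem_meandersTo hy]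
  rw [← card_filter_add_card_filter_not (p := EndsUp), filter_filter, filter_filter]
  congr 2 <;> ext g <;> by_cases h : EndsUp g <;>
    simp [meandersTo, h, ← sub_eq_add_neg, sub_eq_iff_eq_add]

lemma card_meandersTo_succ_zero_not_endsUp (hy : 0 ≤ y) :
    #{f ∈ meandersTo (n + 1) y 0 | ¬EndsUp f} =
      #{g ∈ meandersTo n (y + 1) 0 | ¬EndsUp g} := by
  simp_rw [endsUp_iff_last, Bool.not_eq_true, card_filter_apply_last_eq, snoc_mem_meandersTo hy]
  congr 1
  ext g
  by_cases h : EndsUp g <;> simp [meandersTo, h, ← sub_eq_add_neg, sub_eq_iff_eq_add]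

lemma meandersTo_zero (y : ℤ) (k : ℕ) :
    meandersTo 0 y k = if y = 0 ∧ k = 0 then univ else ∅ := by
  ext f
  simp [meandersTo, IsNonneg, numPeaks, pathVal, eq_comm]

lemma not_endsUp_zero (f : Fin 0 → Bool) : ¬EndsUp f := by
  simp [EndsUp, pathVal]

lemma meandersTo_of_neg (n : ℕ) {y : ℤ} (hy : y < 0) (k : ℕ) : meandersTo n y k = ∅ := by
  refine filter_false_of_mem fun f _ ⟨hf, hfy, _⟩ => ?_
  have := hf n (self_mem_range_succ n)
  omega

lemma card_positive_meanders_eq_sum (n k : ℕ) :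
    #{f : Fin n → Bool | IsNonneg f ∧ 0 < pathVal f n ∧ numPeaks f = k} =
      ∑ j ∈ range n, #(meandersTo n (j + 1) k) := by
  rw [card_eq_sum_card_fiberwise (f := fun f => (pathVal f n).toNat - 1)]
  · refine sum_congr rfl fun j _ => congrArg card ?_
    ext f
    simp only [meandersTo, filter_filter, mem_filter, mem_univ, true_and]
    constructor
    · rintro ⟨⟨hf, hpos, hk⟩, rfl⟩
      exact ⟨hf, by omega, hk⟩
    · rintro ⟨hf, hy, hk⟩
      exact ⟨⟨hf, by omega, hk⟩, by omega⟩
  · intro f hf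
    have := pathVal_le f n
    simp only [coe_filter, mem_univ, true_and, Set.mem_ofPred_eq] at hf
    simp only [coe_range, Set.mem_Iio]
    omega

end Counting

lemma ichoose_of_neg {m : ℤ} (p : ℤ) (hm : m < 0) : ichoose m p = 0 :=
  if_neg fun h => by omega

lemma ichoose_natCast (a b : ℕ) : ichoose a b = a.choose b := by
  simp [ichoose]

lemma ichoose_succ_succ (m : ℤ) (k : ℕ) :
    ichoose (m + 1) (k + 1) = ichoose m (k + 1) + ichoose m k := by
  rcases lt_trichotomy m (-1) with hm | rfl | hm
  · simp [ichoose_of_neg _ (show m < 0 by omega), ichoose_of_neg _ (show m + 1 < 0 by omega)]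
  · simp [ichoose]
  · lift m to ℕ using by omega
    rw [← Nat.cast_one, ← Nat.cast_add, ← Nat.cast_add, ichoose_natCast, ichoose_natCast,
      ichoose_natCast, Nat.choose_succ_succ', Nat.cast_add, add_comm]

lemma hchoose_of_le_one {s : ℤ} (p : ℤ) (hs : s ≤ 1) : hchoose s p = 0 := by
  unfold hchoose
  split_ifs
  · exact ichoose_of_neg p (by omega)
  · rfl

lemma hchoose_of_not_dvd {s : ℤ} (p : ℤ) (hs : ¬ 2 ∣ s) : hchoose s p = 0 :=
  if_neg hs

lemma hchoose_add_two (s : ℤ) (k : ℕ) :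
    hchoose (s + 2) (k + 1) = hchoose s (k + 1) + hchoose s k := by
  by_cases hs : 2 ∣ s
  · rw [hchoose, hchoose, hchoose, if_pos (dvd_add hs dvd_rfl), if_pos hs, if_pos hs,
      show (s + 2) / 2 - 1 = s / 2 - 1 + 1 by omega, ichoose_succ_succ]
  · simp [hchoose_of_not_dvd _ hs, hchoose_of_not_dvd _ (show ¬ 2 ∣ s + 2 by omega)]

lemma hchoose_zero_right (s : ℤ) : hchoose s 0 = if 2 ∣ s ∧ 2 ≤ s then 1 else 0 := by
  unfold hchoose ichoose
  split_ifs <;> first | omega | simp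

lemma hchoose_two_mul (m p : ℤ) : hchoose (2 * m) p = ichoose (m - 1) p := by
  rw [hchoose, if_pos (dvd_mul_right 2 m), Int.mul_ediv_cancel_left m two_ne_zero]

def upFormula (n y : ℤ) (k : ℕ) : ℤ := G (n + 1) k k 1 y - G (n + 1) k k (-1) y

def meanderFormula (n y : ℤ) (k : ℕ) : ℤ := G (n + 2) k k 0 y - G (n + 2) k k (-2) y

lemma upFormula_succ (n y : ℤ) (k : ℕ) :
    upFormula (n + 1) y k = meanderFormula n (y - 1) k := by
  simp only [upFormula, meanderFormula, G]
  ring_nf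

lemma meanderFormula_sub_upFormula_succ_succ (n y : ℤ) (k : ℕ) :
    meanderFormula (n + 1) y (k + 1) - upFormula (n + 1) y (k + 1) =
      upFormula n (y + 1) k + (meanderFormula n (y + 1) (k + 1) - upFormula n (y + 1) (k + 1)) := by
  have h₁ := hchoose_add_two (n + y + 1) k
  have h₂ := hchoose_add_two (n + y + 3) k
  have h₃ := hchoose_add_two (n - y - 1) k
  have h₄ := hchoose_add_two (n - y + 1) k
  simp only [upFormula, meanderFormula, G]
  push_cast
  ring_nf at h₁ h₂ h₃ h₄ ⊢
  rw [h₂, h₄, h₁, h₃]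
  ring

-- The only peakless meander that does not end with an up step is the empty one.
lemma meanderFormula_sub_upFormula_zero {n y : ℤ} (hny : 1 ≤ n + y) :
    meanderFormula n y 0 - upFormula n y 0 = 0 := by
  simp only [upFormula, meanderFormula, G, Nat.cast_zero]
  ring_nf
  simp only [hchoose_zero_right]
  split_ifs <;> omega

lemma meanderFormula_neg_one (n : ℤ) (k : ℕ) : meanderFormula n (-1) k = 0 := by
  simp only [meanderFormula, G]
  ring_nf

lemma upFormula_zero {y : ℤ} (hy : 0 ≤ y) (k : ℕ) : upFormula 0 y k = 0 := by
  simp only [upFormula, G, hchoose_of_le_one _ (show 0 + 1 - y + -1 ≤ 1 by omega), mul_zero,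
    sub_zero]
  rcases le_or_gt y 1 with h | h
  · rw [hchoose_of_le_one _ (show 0 + 1 + y - 1 ≤ 1 by omega), zero_mul]
  · rw [hchoose_of_le_one _ (show 0 + 1 - y + 1 ≤ 1 by omega), mul_zero]

lemma meanderFormula_zero {y : ℤ} (hy : 0 ≤ y) (k : ℕ) :
    meanderFormula 0 y k = if y = 0 ∧ k = 0 then 1 else 0 := by
  simp only [meanderFormula, G, hchoose_of_le_one _ (show 0 + 2 - y + -2 ≤ 1 by omega), mul_zero,
    sub_zero]
  rcases hy.eq_or_lt with rfl | hy
  · rcases k with _ | k <;> simp [hchoose, ichoose]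
  · rw [hchoose_of_le_one _ (show 0 + 2 - y + 0 ≤ 1 by omega), mul_zero, if_neg (by omega)]

lemma meanderFormula_eq_sub (n y : ℤ) (k : ℕ) :
    meanderFormula n y k = G (n + 2) k k 0 y - G (n + 2) k k 0 (y + 2) := by
  simp only [meanderFormula, G]
  ring_nf

lemma sum_range_meanderFormula (n k : ℕ) :
    ∑ j ∈ range n, meanderFormula n (j + 1) k =
      G (n + 2) k k 0 1 + G (n + 2) k k 0 2 -
        (G (n + 2) k k 0 (n + 1) + G (n + 2) k k 0 (n + 2)) := by
  have := sum_range_sub' (fun j : ℕ => G (n + 2) k k 0 (j + 1) + G (n + 2) k k 0 (j + 2)) n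
  push_cast at this
  rw [← this]
  refine sum_congr rfl fun j _ => ?_
  rw [meanderFormula_eq_sub]
  ring_nf

theorem card_meandersTo_filter_endsUp (n : ℕ) {y : ℤ} (hy : 0 ≤ y) (k : ℕ) :
    (#{f ∈ meandersTo n y k | EndsUp f} : ℤ) = upFormula n y k ∧
      (#{f ∈ meandersTo n y k | ¬EndsUp f} : ℤ) = meanderFormula n y k - upFormula n y k := by
  induction n generalizing y k with
  | zero =>
    rw [Nat.cast_zero, upFormula_zero hy, meanderFormula_zero hy, meandersTo_zero]
    split_ifs <;> simp [not_endsUp_zero]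
  | succ n ih =>
    constructor
    · rw [card_meandersTo_succ_endsUp hy, ← card_filter_add_card_filter_not (p := EndsUp),
        Nat.cast_add, Nat.cast_succ, upFormula_succ]
      rcases hy.eq_or_lt with rfl | hy
      · simp [meandersTo_of_neg, meanderFormula_neg_one]
      · rw [(ih (by omega) k).1, (ih (by omega) k).2, add_sub_cancel]
    · rcases k with _ | k
      · rw [card_meandersTo_succ_zero_not_endsUp hy, (ih (by omega) 0).2,
          meanderFormula_sub_upFormula_zero (by omega),
          meanderFormula_sub_upFormula_zero (by omega)]
      · rw [card_meandersTo_succ_succ_not_endsUp hy k, Nat.cast_add, (ih (by omega) k).1,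
          (ih (by omega) (k + 1)).2]
        push_cast
        rw [meanderFormula_sub_upFormula_succ_succ]

lemma card_meandersTo (n : ℕ) {y : ℤ} (hy : 0 ≤ y) (k : ℕ) :
    (#(meandersTo n y k) : ℤ) = meanderFormula n y k := by
  obtain ⟨hup, hnotUp⟩ := card_meandersTo_filter_endsUp n hy k
  rw [← card_filter_add_card_filter_not (p := EndsUp), Nat.cast_add, hup, hnotUp,
    add_sub_cancel]

/-- The number of meanders of length `2N` with exactly `k` peaks ending at a
strictly positive position is `binomial(N+1,k) · binomial(N-1,k)` (the latter
factor vanishing when `N - 1 < 0`). -/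
theorem card_positive_meanders_even (N k : ℕ) :
    (((Finset.univ : Finset (Fin (2 * N) → Bool)).filter
        (fun f => IsNonneg f ∧ 0 < pathVal f (2 * N) ∧ numPeaks f = k)).card : ℤ)
      = ichoose ((N : ℤ) + 1) k * ichoose ((N : ℤ) - 1) k := by
  rw [card_positive_meanders_eq_sum, Nat.cast_sum,
    sum_congr rfl fun j _ => card_meandersTo (2 * N) (by positivity) k, sum_range_meanderFormula]
  simp only [G, Nat.cast_mul, Nat.cast_ofNat]
  rw [hchoose_of_not_dvd _ (show ¬ 2 ∣ 2 * (N : ℤ) + 2 + 1 - 0 by omega),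
    hchoose_of_not_dvd _ (show ¬ 2 ∣ 2 * (N : ℤ) + 2 + (2 * N + 1) - 0 by omega),
    hchoose_of_le_one _ (show 2 * (N : ℤ) + 2 - (2 * N + 2) + 0 ≤ 1 by omega),
    show 2 * (N : ℤ) + 2 + 2 - 0 = 2 * (N + 2) by ring,
    show 2 * (N : ℤ) + 2 - 2 + 0 = 2 * N by ring,
    hchoose_two_mul, hchoose_two_mul]
  ring_nf
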